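/- arXiv:1207.0318 — 9 statements merged into one kernel-verified Lean document; each statement's English description precedes it below -/
import Mathlib

section
/- Let X be a real symmetric n×n positive semidefinite matrix. Then the Hadamard (componentwise) exponential exp_H(X), defined by (exp_H(X))_{ij} = exp(X_{ij}), is completely positive; that is, there exist a natural number k and a matrix U ∈ ℝ^{n×k} with all entries nonnegative such that exp_H(X) = U Uᵀ. -/
/-!
Write `X = ∑ₜ vₜ vₜᵀ`. Then `exp_H(X)` is the Hadamard product of the rank-one exponentials
`(exp (vₜ i * vₜ j))ᵢⱼ`, and complete positivity is preserved by Hadamard products (the Kronecker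
product of the factors `U` is again entrywise nonnegative). For a single vector `x` and a standard
Gaussian `Z`, the likelihood ratio `r a z = exp (a z - a² / 2)` satisfies
`E[r (x i) Z * r (x j) Z] = exp (x i * x j)`, so `(exp (x i * x j))ᵢⱼ` is the mean of the completely
positive matrices `r(x, Z) r(x, Z)ᵀ`. The completely positive cone is convex and closed: its slice
`∑ᵢⱼ Aᵢⱼ ≤ 1` is the convex hull of the compact set `{0} ∪ {v vᵀ | v ∈ stdSimplex}`, and by
Carathéodory convex hulls of compact sets are compact in finite dimension. Hence the mean is
completely positive.
-/

open Matrix Set MeasureTheory ProbabilityTheory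

theorem IsCompact.convexHull {E : Type*} [AddCommGroup E] [Module ℝ E] [TopologicalSpace E]
    [ContinuousAdd E] [ContinuousSMul ℝ E] [FiniteDimensional ℝ E] {K : Set E}
    (hK : IsCompact K) : IsCompact (_root_.convexHull ℝ K) := by
  set N := Module.finrank ℝ E + 1
  let combination : (Fin N → ℝ) × (Fin N → E) → E := fun p => ∑ r, p.1 r • p.2 r
  suffices _root_.convexHull ℝ K =
      combination '' (stdSimplex ℝ (Fin N) ×ˢ univ.pi fun _ => K) by
    rw [this]
    exact ((isCompact_stdSimplex ℝ (Fin N)).prod (isCompact_univ_pi fun _ => hK)).image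
      (by fun_prop)
  refine Subset.antisymm ?_ ?_
  · rw [convexHull_eq_union]
    simp only [iUnion_subset_iff]
    intro t htK ht x hx
    have : Nonempty t := (convexHull_nonempty_iff.mp ⟨x, hx⟩).to_subtype
    obtain ⟨e⟩ : Nonempty (t ↪ Fin N) := Function.Embedding.nonempty_of_card_le <| by
      simpa using ht.card_le_finrank_succ.trans (Nat.succ_le_succ (Submodule.finrank_le _))
    set z : Fin N → E := fun r => ((Function.invFun ⇑e r : t) : E)
    have hz : range z = t := by
      rw [show z = Subtype.val ∘ Function.invFun e from rfl, range_comp,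
        (Function.invFun_surjective e.injective).range_eq, image_univ, Subtype.range_coe]
    have hhull : _root_.convexHull ℝ (range z) ⊆
        Fintype.linearCombination ℝ z '' stdSimplex ℝ (Fin N) := by
      refine convexHull_min ?_ ((convex_stdSimplex ℝ _).linear_image _)
      rintro _ ⟨r, rfl⟩
      exact ⟨Pi.single r 1, single_mem_stdSimplex ℝ r, by simp⟩
    rw [← hz] at hx
    obtain ⟨w, hw, rfl⟩ := hhull hx
    exact ⟨(w, z), ⟨hw, fun r _ => htK (hz ▸ mem_range_self r)⟩,
      (Fintype.linearCombination_apply ℝ z w).symm⟩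
  · rintro _ ⟨⟨w, z⟩, ⟨hw, hz⟩, rfl⟩
    exact (convex_convexHull ℝ K).sum_mem (fun r _ => hw.1 r) hw.2
      fun r _ => subset_convexHull ℝ K (hz r trivial)

namespace ProbabilityTheory

/-- The density of `gaussianReal a 1` with respect to `gaussianReal 0 1`. -/
noncomputable def gaussianTilt (a z : ℝ) : ℝ := Real.exp (a * z - a ^ 2 / 2)

theorem gaussianTilt_pos (a z : ℝ) : 0 < gaussianTilt a z := Real.exp_pos _

theorem gaussianTilt_eq (a z : ℝ) :
    gaussianTilt a z = Real.exp (-(a ^ 2 / 2)) * Real.exp (a * z) := by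
  rw [gaussianTilt, ← Real.exp_add]
  ring_nf

theorem gaussianTilt_mul (a b z : ℝ) :
    gaussianTilt a z * gaussianTilt b z = Real.exp (a * b) * gaussianTilt (a + b) z := by
  simp only [gaussianTilt, ← Real.exp_add]
  ring_nf

theorem integrable_gaussianTilt (a : ℝ) : Integrable (gaussianTilt a) (gaussianReal 0 1) := by
  rw [funext (gaussianTilt_eq a)]
  exact (integrable_exp_mul_gaussianReal a).const_mul _

theorem integral_gaussianTilt (a : ℝ) : ∫ z, gaussianTilt a z ∂gaussianReal 0 1 = 1 := by
  simp_rw [gaussianTilt_eq]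
  rw [integral_const_mul, ← mgf, mgf_fun_id_gaussianReal, ← Real.exp_add]
  simp

end ProbabilityTheory

namespace Matrix

variable {ι : Type*}

def IsCompletelyPositive (A : Matrix ι ι ℝ) : Prop :=
  ∃ (k : ℕ) (U : Matrix ι (Fin k) ℝ), (∀ i j, 0 ≤ U i j) ∧ A = U * Uᵀ

theorem isCompletelyPositive_mul_transpose {κ : Type*} [Fintype κ] (U : Matrix ι κ ℝ)
    (hU : ∀ i j, 0 ≤ U i j) : (U * Uᵀ).IsCompletelyPositive :=
  ⟨_, U.submatrix id (Fintype.equivFin κ).symm, fun _ _ => hU _ _, by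
    ext i j
    simpa [mul_apply] using ((Fintype.equivFin κ).symm.sum_comp fun l => U i l * U j l).symm⟩

theorem isCompletelyPositive_vecMulVec_self {v : ι → ℝ} (hv : 0 ≤ v) :
    (vecMulVec v v).IsCompletelyPositive := by
  simpa [vecMulVec_eq Unit] using
    isCompletelyPositive_mul_transpose (replicateCol Unit v) fun i _ => hv i

theorem mul_transpose_eq_sum_vecMulVec {κ R : Type*} [Fintype κ] [NonUnitalNonAssocSemiring R]
    (U : Matrix ι κ R) :
    U * Uᵀ = ∑ t, vecMulVec (fun i => U i t) (fun i => U i t) := by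
  ext i j
  simp [mul_apply, vecMulVec_apply, Matrix.sum_apply]

namespace IsCompletelyPositive

variable {A B : Matrix ι ι ℝ}

theorem add (hA : A.IsCompletelyPositive) (hB : B.IsCompletelyPositive) :
    (A + B).IsCompletelyPositive := by
  obtain ⟨k, U, hU, rfl⟩ := hA
  obtain ⟨m, V, hV, rfl⟩ := hB
  simpa [transpose_fromCols, fromCols_mul_fromRows] using
    isCompletelyPositive_mul_transpose (fromCols U V) fun i j => by cases j <;> simp [hU, hV]

theorem smul (hA : A.IsCompletelyPositive) {c : ℝ} (hc : 0 ≤ c) :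
    (c • A).IsCompletelyPositive := by
  obtain ⟨k, U, hU, rfl⟩ := hA
  refine ⟨k, √c • U, fun i j => mul_nonneg (Real.sqrt_nonneg c) (hU i j), ?_⟩
  rw [transpose_smul, Matrix.smul_mul, Matrix.mul_smul, smul_smul, Real.mul_self_sqrt hc]

theorem hadamard (hA : A.IsCompletelyPositive) (hB : B.IsCompletelyPositive) :
    (A ⊙ B).IsCompletelyPositive := by
  obtain ⟨k, U, hU, rfl⟩ := hA
  obtain ⟨m, V, hV, rfl⟩ := hB
  convert isCompletelyPositive_mul_transpose (of fun i (p : Fin k × Fin m) => U i p.1 * V i p.2)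
    fun i p => mul_nonneg (hU _ _) (hV _ _) using 1
  ext i j
  simp only [hadamard_apply, mul_apply, transpose_apply, of_apply, Finset.sum_mul_sum,
    Fintype.sum_prod_type]
  exact Finset.sum_congr rfl fun _ _ => Finset.sum_congr rfl fun _ _ => by ring

end IsCompletelyPositive

theorem convex_setOf_isCompletelyPositive :
    Convex ℝ {A : Matrix ι ι ℝ | A.IsCompletelyPositive} :=
  fun _ hA _ hB _ _ ha hb _ => (hA.smul ha).add (hB.smul hb)

theorem isCompletelyPositive_hadamard_prod {α : Type*} (s : Finset α) {A : α → Matrix ι ι ℝ}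
    (hA : ∀ a ∈ s, (A a).IsCompletelyPositive) :
    (of fun i j => ∏ a ∈ s, A a i j).IsCompletelyPositive := by
  classical
  induction s using Finset.induction_on with
  | empty =>
    simpa [vecMulVec, Pi.one_def] using isCompletelyPositive_vecMulVec_self (ι := ι) zero_le_one
  | insert a s ha ih =>
    simp_rw [Finset.prod_insert ha]
    exact (hA a (s.mem_insert_self a)).hadamard (ih fun b hb => hA b (Finset.mem_insert_of_mem hb))

section Fintype

variable [Fintype ι]

theorem exists_vecMulVec_self_eq_sq_smul {u : ι → ℝ} (hu : 0 ≤ u) :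
    ∃ p ∈ insert 0 ((fun v => vecMulVec v v) '' stdSimplex ℝ ι),
      vecMulVec u u = (∑ i, u i) ^ 2 • p := by
  by_cases hσ : ∑ i, u i = 0
  · have hu0 : u = 0 :=
      funext ((Finset.sum_eq_zero_iff_of_nonneg fun i _ => hu i).mp hσ · (Finset.mem_univ _))
    exact ⟨0, mem_insert _ _, by simp [hu0]⟩
  · set v := (∑ i, u i)⁻¹ • u
    have hv : v ∈ stdSimplex ℝ ι :=
      ⟨fun i => mul_nonneg (inv_nonneg.mpr (Finset.sum_nonneg fun i _ => hu i)) (hu i),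
        by simp [v, ← Finset.mul_sum, hσ]⟩
    refine ⟨vecMulVec v v, mem_insert_of_mem _ ⟨v, hv, rfl⟩, ?_⟩
    rw [smul_vecMulVec, vecMulVec_smul, smul_smul, smul_smul]
    field_simp
    simp

theorem IsCompletelyPositive.mem_convexHull {A : Matrix ι ι ℝ} (hA : A.IsCompletelyPositive)
    (hsum : ∑ i, ∑ j, A i j ≤ 1) :
    A ∈ convexHull ℝ (insert 0 ((fun v => vecMulVec v v) '' stdSimplex ℝ ι)) := by
  obtain ⟨k, U, hU, rfl⟩ := hA
  choose p hp hUp using fun t =>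
    exists_vecMulVec_self_eq_sq_smul (u := fun i => U i t) (fun i => hU i t)
  set w : Fin k → ℝ := fun t => (∑ i, U i t) ^ 2
  have hA : U * Uᵀ = ∑ t, w t • p t := by
    rw [mul_transpose_eq_sum_vecMulVec]
    exact Finset.sum_congr rfl fun t _ => hUp t
  have hw : ∑ t, w t = ∑ i, ∑ j, (U * Uᵀ) i j := by
    simp only [w, sq, Finset.sum_mul_sum, mul_apply, transpose_apply]
    rw [Finset.sum_comm]
    exact Finset.sum_congr rfl fun i _ => Finset.sum_comm
  rw [← hw] at hsum
  -- the missing weight `1 - ∑ t, w t` goes to the point `0`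
  have hmem :=
    (convex_convexHull ℝ (insert 0 ((fun v => vecMulVec v v) '' stdSimplex ℝ ι))).sum_mem
      (t := Finset.univ) (w := Option.elim' (1 - ∑ t, w t) w) (z := Option.elim' 0 p)
      (fun o _ => by cases o <;> simp [w, hsum, sq_nonneg])
      (by simp [Fintype.sum_option])
      (fun o _ => subset_convexHull ℝ _ (by cases o; exacts [mem_insert _ _, hp _]))
  simpa [Fintype.sum_option, hA] using hmem

theorem isClosed_setOf_isCompletelyPositive :
    IsClosed {A : Matrix ι ι ℝ | A.IsCompletelyPositive} := by
  set C := {A : Matrix ι ι ℝ | A.IsCompletelyPositive}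
  set H := convexHull ℝ (insert 0 ((fun v => vecMulVec v v) '' stdSimplex ℝ ι))
  have hH : IsClosed H :=
    (((isCompact_stdSimplex ℝ ι).image (by fun_prop)).insert 0).convexHull.isClosed
  have hHC : H ⊆ C := by
    refine convexHull_min (insert_subset ?_ ?_) convex_setOf_isCompletelyPositive
    · simpa [C] using isCompletelyPositive_vecMulVec_self (le_refl (0 : ι → ℝ))
    · rintro _ ⟨v, hv, rfl⟩
      exact isCompletelyPositive_vecMulVec_self hv.1
  -- scaled into the open slice `∑ i, ∑ j, A i j < 1`, a limit point of `C` is one of `C ∩ slice ⊆ H`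
  refine isClosed_of_closure_subset fun A hA => ?_
  set T := |∑ i, ∑ j, A i j| + 1
  have hT : 0 < T := by positivity
  have hAT : T⁻¹ • A ∈ closure C :=
    closure_mono (smul_set_subset_iff.mpr fun B hB => hB.smul (inv_nonneg.mpr hT.le))
      (smul_closure_subset _ _ ⟨A, hA, rfl⟩)
  have hslice : IsOpen {B : Matrix ι ι ℝ | ∑ i, ∑ j, B i j < 1} :=
    isOpen_lt (by fun_prop) continuous_const
  have hlt : ∑ i, ∑ j, (T⁻¹ • A) i j < 1 := by
    simp only [smul_apply, smul_eq_mul, ← Finset.mul_sum]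
    rw [inv_mul_lt_one₀ hT]
    exact (le_abs_self _).trans_lt (lt_add_one _)
  have hATH : T⁻¹ • A ∈ H := hH.closure_subset_iff.mpr
    (fun B hB => hB.2.mem_convexHull hB.1.le) (hslice.inter_closure ⟨hlt, hAT⟩)
  simpa [C, smul_smul, hT.ne'] using (hHC hATH).smul hT.le

theorem isCompletelyPositive_exp_mul (x : ι → ℝ) :
    (of fun i j => Real.exp (x i * x j)).IsCompletelyPositive := by
  -- integrate in `ι → ι → ℝ`: `Matrix` carries no global norm
  set F : ℝ → ι → ι → ℝ := fun z i j => gaussianTilt (x i) z * gaussianTilt (x j) z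
  have hF : ∀ i j, Integrable (fun z => F z i j) (gaussianReal 0 1) := fun i j => by
    simp_rw [F, gaussianTilt_mul]
    exact (integrable_gaussianTilt _).const_mul _
  have hmean : ∫ z, F z ∂gaussianReal 0 1 = fun i j => Real.exp (x i * x j) := by
    ext i j
    rw [eval_integral fun i => Integrable.of_eval (hF i), eval_integral (hF i)]
    simp_rw [F, gaussianTilt_mul]
    rw [integral_const_mul, integral_gaussianTilt, mul_one]
  have hmem := Convex.integral_mem (s := {B : ι → ι → ℝ | (of B).IsCompletelyPositive})
    convex_setOf_isCompletelyPositive isClosed_setOf_isCompletelyPositive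
    (ae_of_all _ fun z =>
      isCompletelyPositive_vecMulVec_self fun i => (gaussianTilt_pos (x i) z).le)
    (Integrable.of_eval fun i => Integrable.of_eval (hF i))
  rwa [hmean] at hmem

end Fintype

end Matrix

/-- If `X` is a real symmetric positive semidefinite matrix, then its Hadamard
(componentwise) exponential is completely positive. -/
theorem hadamard_exp_completelyPositive (n : ℕ) (X : Matrix (Fin n) (Fin n) ℝ)
    (hX : X.PosSemidef) :
    ∃ (k : ℕ) (U : Matrix (Fin n) (Fin k) ℝ),
      (∀ i j, 0 ≤ U i j) ∧ Matrix.of (fun i j => Real.exp (X i j)) = U * Uᵀ := by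
  obtain ⟨m, v, rfl⟩ := posSemidef_iff_eq_sum_vecMulVec.mp hX
  have hprod : (of fun i j => Real.exp ((∑ t, vecMulVec (v t) (star (v t))) i j)) =
      of fun i j => ∏ t, Real.exp (v t i * v t j) := by
    ext i j
    simp [Matrix.sum_apply, vecMulVec_apply, Real.exp_sum]
  rw [hprod]
  exact isCompletelyPositive_hadamard_prod _ fun t _ => isCompletelyPositive_exp_mul (v t)
end

section
/- Let v ∈ ℝⁿ and set M = max_{i=1,…,n} |v_i|. Define y = M·1 + v (where 1 is the all-ones vector) and z ∈ ℝⁿ by z_i = exp(−M v_i). Then y and z are entrywise nonnegative and for all indices i, j one has exp(v_i v_j) = exp(−M²) · exp(y_i y_j) · z_i z_j; that is, exp_H(v vᵀ) = exp(−M²) · (exp_H(y yᵀ) ∘ (z zᵀ)). -/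
theorem Real.exp_mul_eq_exp_neg_sq_mul_exp_add_mul_add (M a b : ℝ) :
    Real.exp (a * b) =
      Real.exp (-(M ^ 2)) * Real.exp ((M + a) * (M + b)) *
        (Real.exp (-(M * a)) * Real.exp (-(M * b))) := by
  simp only [← Real.exp_add]
  ring_nf

/-- With `M = max_i |v_i|`, `y = M·1 + v` and `z_i = exp(-M v_i)`, the vectors `y, z`
are nonnegative and `exp_H(v vᵀ) = exp(-M²) · (exp_H(y yᵀ) ∘ (z zᵀ))` entrywise. -/
theorem hadamard_exp_vecMulVec_decomp (n : ℕ) (v : Fin n → ℝ) (M : ℝ)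
    (hM : IsGreatest (Set.range fun i => |v i|) M)
    (y z : Fin n → ℝ)
    (hy : y = fun i => M + v i)
    (hz : z = fun i => Real.exp (-(M * v i))) :
    (∀ i, 0 ≤ y i) ∧ (∀ i, 0 ≤ z i) ∧
    ∀ i j, Real.exp (v i * v j) =
      Real.exp (-(M ^ 2)) * Real.exp (y i * y j) * (z i * z j) := by
  subst hy hz
  exact ⟨fun i => neg_le_iff_add_nonneg'.mp (neg_le_of_abs_le (hM.2 ⟨i, rfl⟩)),
    fun i => (Real.exp_pos _).le,
    fun i j => Real.exp_mul_eq_exp_neg_sq_mul_exp_add_mul_add M (v i) (v j)⟩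
end

section
/- Let y ∈ ℝⁿ be an entrywise nonnegative vector. Then the Hadamard exponential exp_H(y yᵀ), with entries exp(y_i y_j), is completely positive: it equals the convergent series Σ_{k=0}^∞ (1/k!) (y yᵀ)^{∘k}, where each Hadamard power (y yᵀ)^{∘k} has entries (y_i y_j)^k and is a rank-one matrix w_k w_kᵀ with w_k entrywise nonnegative. -/
/-!
Since `exp (yᵢ yⱼ) = ∑ₖ (yᵢᵏ)(yⱼᵏ) / k!`, the partial sums of the series are finite sums of
nonnegative rank-one matrices. By Carathéodory's theorem in the `n²`-dimensional space of
matrices, each partial sum is `U Uᵀ` for a nonnegative `U` with only `n² + 1` columns. With the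
number of columns fixed, the entries of `U` are bounded by the diagonal of `U Uᵀ`, so by
compactness the limit `exp_H(y yᵀ)` is again of the form `U Uᵀ`.
-/

open Matrix

open Filter Topology Finset

open Fintype (card)

theorem Real.hasSum_inv_factorial_mul_pow (x : ℝ) :
    HasSum (fun k : ℕ => ((Nat.factorial k : ℝ))⁻¹ * x ^ k) (Real.exp x) := by
  simpa [div_eq_inv_mul, ← Real.exp_eq_exp_ℝ] using NormedSpace.expSeries_div_hasSum_exp x

namespace Matrix

variable {ι κ κ' : Type*}

/-- `A` is completely positive with cp-rank at most `card κ`. -/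
def HasNonnegFactor (κ : Type*) [Fintype κ] (A : Matrix ι ι ℝ) : Prop :=
  ∃ U : Matrix ι κ ℝ, (∀ i a, 0 ≤ U i a) ∧ A = U * Uᵀ

theorem mul_transpose_self_eq_sum_vecMulVec [Fintype κ] (U : Matrix ι κ ℝ) :
    U * Uᵀ = ∑ a, vecMulVec (Uᵀ a) (Uᵀ a) := by
  ext i j
  simp [mul_apply, vecMulVec_apply, sum_apply]

theorem smul_vecMulVec_self {c : ℝ} (hc : 0 ≤ c) (v : ι → ℝ) :
    c • vecMulVec v v = vecMulVec (√c • v) (√c • v) := by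
  rw [smul_vecMulVec, vecMulVec_smul, smul_smul, Real.mul_self_sqrt hc]

theorem hasNonnegFactor_sum_smul_vecMulVec [Fintype κ] {c : κ → ℝ} (hc : ∀ a, 0 ≤ c a)
    {v : κ → ι → ℝ} (hv : ∀ a i, 0 ≤ v a i) :
    HasNonnegFactor κ (∑ a, c a • vecMulVec (v a) (v a)) := by
  refine ⟨of fun i a => √(c a) * v a i, fun i a => mul_nonneg (Real.sqrt_nonneg _) (hv a i), ?_⟩
  rw [mul_transpose_self_eq_sum_vecMulVec]
  exact sum_congr rfl fun a _ => smul_vecMulVec_self (hc a) (v a)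

theorem HasNonnegFactor.of_card_le [Fintype κ] [Fintype κ'] {A : Matrix ι ι ℝ}
    (h : HasNonnegFactor κ A) (hcard : card κ ≤ card κ') : HasNonnegFactor κ' A := by
  obtain ⟨U, hU, rfl⟩ := h
  let e : κ ⊕ Fin (card κ' - card κ) ≃ κ' :=
    Fintype.equivOfCardEq (by simp only [Fintype.card_sum, Fintype.card_fin]; omega)
  refine ⟨(fromCols U 0).submatrix id e.symm, fun i a => ?_, ?_⟩
  · show 0 ≤ fromCols U 0 i (e.symm a)
    rcases e.symm a with b | b
    exacts [hU i b, le_rfl]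
  · rw [transpose_submatrix, submatrix_mul_equiv, submatrix_id_id, transpose_fromCols,
      fromCols_mul_fromRows, Matrix.zero_mul, add_zero]

/- Carathéodory: `(card κ)⁻¹ • U Uᵀ` is a convex combination of the rank-one matrices built
from the columns of `U`, hence of at most `dim (Matrix ι ι ℝ) + 1` of them. -/
theorem HasNonnegFactor.fin_card_mul_card_succ [Fintype ι] [Fintype κ] {A : Matrix ι ι ℝ}
    (h : HasNonnegFactor κ A) : HasNonnegFactor (Fin (card ι * card ι + 1)) A := by
  by_cases hκ : card κ ≤ card ι * card ι + 1
  · exact h.of_card_le (by simpa using hκ)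
  have hpos : 0 < card κ := by omega
  obtain ⟨U, hU, rfl⟩ := h
  have hmem : (card κ : ℝ)⁻¹ • (U * Uᵀ) ∈
      convexHull ℝ (Set.range fun a => vecMulVec (Uᵀ a) (Uᵀ a)) := by
    have := centerMass_mem_convexHull (R := ℝ) univ (w := fun _ => 1)
      (z := fun a => vecMulVec (Uᵀ a) (Uᵀ a)) (by simp) (by simpa using hpos)
      (fun a _ => Set.mem_range_self a)
    simpa [centerMass, mul_transpose_self_eq_sum_vecMulVec] using this
  obtain ⟨ι', _, z, w, hz, hind, hw, -, hsum⟩ := eq_pos_convex_span_of_mem_convexHull hmem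
  choose a ha using fun i => hz (Set.mem_range_self i)
  have hA : U * Uᵀ = ∑ i, (card κ * w i) • vecMulVec (Uᵀ (a i)) (Uᵀ (a i)) :=
    calc U * Uᵀ = (card κ : ℝ) • ∑ i, w i • z i := by
          rw [hsum, smul_inv_smul₀ (Nat.cast_ne_zero.2 hpos.ne')]
      _ = _ := by simp_rw [smul_sum, smul_smul, ← ha]
  refine (hA ▸ hasNonnegFactor_sum_smul_vecMulVec
    (fun i => mul_nonneg (Nat.cast_nonneg _) (hw i).le) (fun i j => hU j (a i))).of_card_le ?_
  calc card ι' ≤ Module.finrank ℝ (vectorSpan ℝ (Set.range z)) + 1 := hind.card_le_finrank_succ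
    _ ≤ Module.finrank ℝ (Matrix ι ι ℝ) + 1 := by gcongr; exact Submodule.finrank_le _
    _ = _ := by simp [Module.finrank_matrix]

theorem sq_le_mul_transpose_self_apply [Fintype κ] (U : Matrix ι κ ℝ) (i : ι) (a : κ) :
    U i a ^ 2 ≤ (U * Uᵀ) i i := by
  rw [mul_apply]
  simpa [sq] using single_le_sum (fun b _ => mul_self_nonneg (U i b)) (mem_univ a)

theorem isSeqClosed_setOf_hasNonnegFactor [Finite ι] [Fintype κ] :
    IsSeqClosed {A : Matrix ι ι ℝ | HasNonnegFactor κ A} := by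
  intro A A₀ hA hlim
  choose U hU hAU using hA
  choose C hC using fun i =>
    (((continuous_apply_apply i i).tendsto A₀).comp hlim).bddAbove_range
  set K : Set (ι → κ → ℝ) := Set.univ.pi fun i => Set.univ.pi fun _ => Set.Icc 0 √(C i)
  have hK : IsCompact K := isCompact_univ_pi fun _ => isCompact_univ_pi fun _ => isCompact_Icc
  have hUK : ∀ t, U t ∈ K := fun t i _ a _ =>
    ⟨hU t i a, (le_abs_self _).trans <| Real.abs_le_sqrt <|
      (hAU t ▸ sq_le_mul_transpose_self_apply (U t) i a).trans (hC i ⟨t, rfl⟩)⟩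
  obtain ⟨U₀, hU₀, φ, hφ, hUφ⟩ := hK.tendsto_subseq hUK
  refine ⟨U₀, fun i a => (hU₀ i trivial a trivial).1,
    tendsto_nhds_unique (hlim.comp hφ.tendsto_atTop) ?_⟩
  have hcont : Continuous fun U : Matrix ι κ ℝ => U * Uᵀ :=
    continuous_id.matrix_mul continuous_id.matrix_transpose
  exact ((hcont.tendsto U₀).comp hUφ).congr fun t => (hAU (φ t)).symm

end Matrix

/-- For a nonnegative vector `y`, the Hadamard exponential `exp_H(y yᵀ)` equals the
convergent series `∑ₖ (1/k!) (y yᵀ)^{∘k}`, each Hadamard power `(y yᵀ)^{∘k}` is the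
rank-one matrix `wₖ wₖᵀ` with `wₖ = (yᵢᵏ)ᵢ` nonnegative, and `exp_H(y yᵀ)` is
completely positive. -/
theorem hadamard_exp_nonneg_vec_completelyPositive (n : ℕ) (y : Fin n → ℝ)
    (hy : ∀ i, 0 ≤ y i) :
    (∀ i j, HasSum (fun k : ℕ => ((Nat.factorial k : ℝ))⁻¹ * (y i * y j) ^ k)
      (Real.exp (y i * y j))) ∧
    (∀ k : ℕ, Matrix.of (fun i j : Fin n => (y i * y j) ^ k) =
        Matrix.vecMulVec (fun i => y i ^ k) (fun i => y i ^ k) ∧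
      ∀ i, 0 ≤ y i ^ k) ∧
    ∃ (m : ℕ) (U : Matrix (Fin n) (Fin m) ℝ),
      (∀ i j, 0 ≤ U i j) ∧
      Matrix.of (fun i j => Real.exp (y i * y j)) = U * Uᵀ := by
  refine ⟨fun i j => Real.hasSum_inv_factorial_mul_pow _,
    fun k => ⟨by ext i j; simp [vecMulVec_apply, mul_pow], fun i => pow_nonneg (hy i) k⟩, ?_⟩
  set term : ℕ → Matrix (Fin n) (Fin n) ℝ := fun k =>
    ((Nat.factorial k : ℝ))⁻¹ • vecMulVec (fun i => y i ^ k) (fun i => y i ^ k)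
  have hpartial : ∀ t, HasNonnegFactor (Fin (n * n + 1)) (∑ k ∈ range t, term k) := fun t => by
    have := (hasNonnegFactor_sum_smul_vecMulVec (c := fun k : Fin t => ((Nat.factorial k : ℝ))⁻¹)
      (fun k => by positivity) (fun k i => pow_nonneg (hy i) k)).fin_card_mul_card_succ
    rwa [Fintype.card_fin, Fin.sum_univ_eq_sum_range term] at this
  have hlim : Tendsto (fun t => ∑ k ∈ range t, term k) atTop
      (𝓝 (of fun i j => Real.exp (y i * y j))) := by
    refine tendsto_pi_nhds.2 fun i => tendsto_pi_nhds.2 fun j => ?_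
    simpa [term, Matrix.sum_apply, vecMulVec_apply, mul_pow] using
      (Real.hasSum_inv_factorial_mul_pow (y i * y j)).tendsto_sum_nat
  exact ⟨_, isSeqClosed_setOf_hasNonnegFactor hpartial hlim⟩
end

section
/- For every vector v ∈ ℝⁿ (not necessarily nonnegative), the Hadamard exponential exp_H(v vᵀ), with entries exp(v_i v_j), is completely positive. -/
/-!
List the entries of `v` as values of a strictly increasing sequence `x 0 < x 1 < ⋯` and perform
Cholesky elimination on the kernel matrix `(exp (x i * x j))` with the pivots in increasing
order. After `k` steps the column of `x j` (`k ≤ j`) becomes the exponential sum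
`t ↦ exp (x j * t) + ∑_{l < k} c_l exp (x l * t)`, vanishing at `x 0, …, x (k - 1)`. By Rolle's
theorem an exponential sum with `m` distinct frequencies and `m` zeros is identically zero, so
this function has no zero to the right of `x (k - 1)`; since it is positive near `+∞`, it is
positive there. Hence every pivot and every entry of the Cholesky factor is nonnegative, which
is the required factorization `U * Uᵀ` with `U ≥ 0`.
-/

open Matrix

open Finset Filter Real Topology

theorem exists_finset_deriv_eq_zero_card_le {f : ℝ → ℝ} (hf : Differentiable ℝ f)
    {Z : Finset ℝ} (hZ : ∀ z ∈ Z, f z = 0) :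
    ∃ Z' : Finset ℝ, (∀ z ∈ Z', deriv f z = 0) ∧ #Z ≤ #Z' + 1 := by
  have rolle : ∀ p : ℝ × ℝ, ∃ ξ, p ∈ Z ×ˢ Z → p.1 < p.2 →
      ξ ∈ Set.Ioo p.1 p.2 ∧ deriv f ξ = 0 := by
    rintro ⟨x, y⟩
    by_cases h : (x, y) ∈ Z ×ˢ Z ∧ x < y
    · obtain ⟨hxy, hlt⟩ := h
      rw [mem_product] at hxy
      obtain ⟨ξ, hξ, hξ'⟩ := exists_deriv_eq_zero hlt hf.continuous.continuousOn
        ((hZ x hxy.1).trans (hZ y hxy.2).symm)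
      exact ⟨ξ, fun _ _ => ⟨hξ, hξ'⟩⟩
    · exact ⟨0, fun h₁ h₂ => absurd ⟨h₁, h₂⟩ h⟩
  choose ξ hξ using rolle
  refine ⟨({p ∈ Z ×ˢ Z | p.1 < p.2}).image ξ, ?_, card_le_of_interleaved ?_⟩
  · simp only [mem_image, mem_filter]
    rintro _ ⟨p, ⟨hp, hlt⟩, rfl⟩
    exact (hξ p hp hlt).2
  · intro x hx y hy hxy _
    have hp : (x, y) ∈ Z ×ˢ Z := mem_product.2 ⟨hx, hy⟩
    exact ⟨ξ (x, y), mem_image_of_mem _ (mem_filter.2 ⟨hp, hxy⟩), (hξ _ hp hxy).1⟩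

theorem sum_exp_coeffs_eq_zero {ι : Type*} (s : Finset ι) {b : ι → ℝ} (hb : Set.InjOn b s)
    (c : ι → ℝ) {Z : Finset ℝ} (hZ : #s ≤ #Z)
    (h : ∀ z ∈ Z, ∑ l ∈ s, c l * exp (b l * z) = 0) : ∀ l ∈ s, c l = 0 := by
  classical
  induction s using Finset.induction_on generalizing b c Z with
  | empty => simp
  | insert a s ha ih =>
    -- dividing by `exp (b a * t)` and differentiating removes the term of index `a`
    set F : ℝ → ℝ := fun t => ∑ l ∈ insert a s, c l * exp ((b l - b a) * t)
    have hF : ∀ t, HasDerivAt F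
        (∑ l ∈ insert a s, c l * (b l - b a) * exp ((b l - b a) * t)) t := fun t =>
      HasDerivAt.fun_sum fun l _ =>
        (((hasDerivAt_id' t).const_mul _).exp.const_mul (c l)).congr_deriv (by ring)
    have hF' : ∀ t, deriv F t = ∑ l ∈ s, c l * (b l - b a) * exp ((b l - b a) * t) := by
      intro t
      rw [(hF t).deriv, sum_insert ha, sub_self, mul_zero, zero_mul, zero_add]
    have hFZ : ∀ z ∈ Z, F z = 0 := by
      intro z hz
      calc F z = exp (-(b a * z)) * ∑ l ∈ insert a s, c l * exp (b l * z) := by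
            simp only [F, mul_sum]
            refine sum_congr rfl fun l _ => ?_
            rw [sub_mul, sub_eq_add_neg, exp_add]; ring
        _ = 0 := by rw [h z hz, mul_zero]
    obtain ⟨Z', hZ', hcard⟩ :=
      exists_finset_deriv_eq_zero_card_le (fun t => (hF t).differentiableAt) hFZ
    have hbne : ∀ l ∈ s, b l - b a ≠ 0 := fun l hl hba =>
      ha (hb (mem_insert_of_mem hl) (mem_insert_self a s) (sub_eq_zero.1 hba) ▸ hl)
    have hs : ∀ l ∈ s, c l = 0 := by
      intro l hl
      refine (mul_eq_zero.1 (ih (b := fun l => b l - b a) (c := fun l => c l * (b l - b a))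
        (Z := Z') ?_ ?_ (fun z hz => hF' z ▸ hZ' z hz) l hl)).resolve_right (hbne l hl)
      · exact fun l₁ h₁ l₂ h₂ h₁₂ =>
          hb (mem_insert_of_mem h₁) (mem_insert_of_mem h₂) (sub_left_injective h₁₂)
      · rw [card_insert_of_notMem ha] at hZ
        omega
    obtain ⟨z, hz⟩ : Z.Nonempty := card_pos.1 (by rw [card_insert_of_notMem ha] at hZ; omega)
    have ha0 : c a * exp (b a * z) = 0 := by
      have hrest : ∑ l ∈ s, c l * exp (b l * z) = 0 :=
        sum_eq_zero fun l hl => by rw [hs l hl, zero_mul]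
      simpa only [sum_insert ha, hrest, add_zero] using h z hz
    intro l hl
    rcases mem_insert.1 hl with rfl | hl
    · exact (mul_eq_zero.1 ha0).resolve_right (exp_ne_zero _)
    · exact hs l hl

theorem exp_add_sum_exp_pos {ι : Type*} {s : Finset ι} {b : ι → ℝ} (hb : Set.InjOn b s)
    {a : ℝ} (hba : ∀ l ∈ s, b l < a) (c : ι → ℝ) {Z : Finset ℝ} (hZ : #s ≤ #Z)
    (hzero : ∀ z ∈ Z, exp (a * z) + ∑ l ∈ s, c l * exp (b l * z) = 0)
    {t : ℝ} (ht : ∀ z ∈ Z, z < t) :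
    0 < exp (a * t) + ∑ l ∈ s, c l * exp (b l * t) := by
  set F : ℝ → ℝ := fun t => exp (a * t) + ∑ l ∈ s, c l * exp (b l * t)
  have hF : Continuous F := by fun_prop
  have hF_eventually_pos : ∀ᶠ u in atTop, 0 < F u := by
    have hsum : Tendsto (fun u => ∑ l ∈ s, c l * exp ((b l - a) * u)) atTop (𝓝 0) := by
      rw [← sum_const_zero]
      refine tendsto_finsetSum _ fun l hl => ?_
      simpa using ((tendsto_exp_atBot.comp
        (tendsto_id.const_mul_atTop_of_neg (sub_neg.2 (hba l hl)))).const_mul (c l))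
    filter_upwards [hsum.eventually (lt_mem_nhds neg_one_lt_zero)] with u hu
    calc 0 < exp (a * u) * (1 + ∑ l ∈ s, c l * exp ((b l - a) * u)) :=
          mul_pos (exp_pos _) (by linarith)
      _ = F u := by
        simp only [F, mul_add, mul_one, mul_sum]
        congr 1
        refine sum_congr rfl fun l _ => ?_
        rw [mul_left_comm, ← exp_add]
        ring_nf
  by_contra! hle
  obtain ⟨T, hFT, htT⟩ := (hF_eventually_pos.and (eventually_gt_atTop t)).exists
  obtain ⟨t₁, ht₁, hFt₁⟩ := intermediate_value_Icc htT.le hF.continuousOn ⟨hle, hFT.le⟩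
  -- `F` would have `#s + 1` zeros, forcing the coefficient `1` of `exp (a * t)` to vanish
  have ht₁Z : t₁ ∉ Z := fun h => (ht t₁ h).not_ge ht₁.1
  refine one_ne_zero (sum_exp_coeffs_eq_zero (insertNone s) (b := fun o => o.elim a b) ?_
    (fun o => o.elim 1 c) (Z := insert t₁ Z) ?_ ?_ none (mem_insertNone.2 (by simp)))
  · rintro (_ | l) ho (_ | l') ho' h
    all_goals simp only [mem_coe, some_mem_insertNone] at ho ho'
    · rfl
    · exact absurd h (hba l' ho').ne'
    · exact absurd h (hba l ho).ne
    · rw [hb ho ho' h]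
  · rw [card_insertNone, card_insert_of_notMem ht₁Z]
    omega
  · intro z hz
    rw [sum_insertNone]
    rcases mem_insert.1 hz with rfl | hz
    · simpa using hFt₁
    · simpa using hzero z hz

/-- Gaussian elimination on the kernel `(s, t) ↦ exp (s * t)` with the pivots `x 0, x 1, …`:
`schurKernel x k j` is the column `t ↦ exp (x j * t)` once the first `k` pivots are eliminated. -/
noncomputable def schurKernel (x : ℕ → ℝ) : ℕ → ℕ → ℝ → ℝ
  | 0, j, t => exp (x j * t)
  | k + 1, j, t => schurKernel x k j t -
      schurKernel x k j (x k) / schurKernel x k k (x k) * schurKernel x k k t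

namespace schurKernel

variable (x : ℕ → ℝ)

theorem apply_comm (k i j : ℕ) : schurKernel x k j (x i) = schurKernel x k i (x j) := by
  induction k generalizing i j with
  | zero => simp only [schurKernel, mul_comm]
  | succ k ih =>
    simp only [schurKernel]
    rw [ih i j, ih k j, ih i k]
    ring

theorem exists_eq_exp_add_sum (k j : ℕ) :
    ∃ c : ℕ → ℝ, ∀ t, schurKernel x k j t = exp (x j * t) + ∑ l ∈ range k, c l * exp (x l * t) := by
  induction k generalizing j with
  | zero => exact ⟨0, fun t => by simp [schurKernel]⟩
  | succ k ih =>
    obtain ⟨c₁, h₁⟩ := ih j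
    obtain ⟨c₂, h₂⟩ := ih k
    set r := schurKernel x k j (x k) / schurKernel x k k (x k)
    refine ⟨fun l => if l < k then c₁ l - r * c₂ l else -r, fun t => ?_⟩
    have hsum : ∑ l ∈ range k, (if l < k then c₁ l - r * c₂ l else -r) * exp (x l * t) =
        ∑ l ∈ range k, c₁ l * exp (x l * t) - r * ∑ l ∈ range k, c₂ l * exp (x l * t) := by
      rw [mul_sum, ← sum_sub_distrib]
      exact sum_congr rfl fun l hl => by rw [if_pos (mem_range.1 hl)]; ring
    change schurKernel x k j t - r * schurKernel x k k t = _
    simp only [h₁, h₂, sum_range_succ, hsum, lt_irrefl, if_false]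
    ring

variable {x}

theorem pos_of_forall_eq_zero (hx : StrictMono x) {k j : ℕ} (hkj : k ≤ j)
    (hzero : ∀ i < k, schurKernel x k j (x i) = 0) {t : ℝ} (ht : ∀ i < k, x i < t) :
    0 < schurKernel x k j t := by
  obtain ⟨c, hc⟩ := exists_eq_exp_add_sum x k j
  rw [hc]
  refine exp_add_sum_exp_pos hx.injective.injOn
    (fun l hl => hx (lt_of_lt_of_le (mem_range.1 hl) hkj)) c
    (Z := (range k).image x) (card_image_of_injective _ hx.injective).ge ?_ ?_
  · simpa only [forall_mem_image, mem_range, hc] using hzero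
  · simpa only [forall_mem_image, mem_range] using ht

theorem apply_eq_zero (hx : StrictMono x) {k i : ℕ} (hik : i < k) (j : ℕ) :
    schurKernel x k j (x i) = 0 := by
  induction k generalizing i j with
  | zero => omega
  | succ k ih =>
    have hpivot : schurKernel x k k (x k) ≠ 0 :=
      (pos_of_forall_eq_zero hx le_rfl (fun i hi => ih hi k) fun i hi => hx hi).ne'
    rw [schurKernel]
    rcases (Nat.lt_succ_iff_lt_or_eq.1 hik) with hik | rfl
    · rw [ih hik j, ih hik k, mul_zero, sub_zero]
    · rw [div_mul_cancel₀ _ hpivot, sub_self]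

theorem pos (hx : StrictMono x) {k j : ℕ} (hkj : k ≤ j) {t : ℝ} (ht : ∀ i < k, x i < t) :
    0 < schurKernel x k j t :=
  pos_of_forall_eq_zero hx hkj (fun _ hi => apply_eq_zero hx hi j) ht

theorem apply_nonneg (hx : StrictMono x) (k j : ℕ) : 0 ≤ schurKernel x k j (x k) := by
  rcases le_or_gt k j with hkj | hjk
  · exact (pos hx hkj fun i hi => hx hi).le
  · rw [apply_comm, apply_eq_zero hx hjk]

end schurKernel

noncomputable def expCholesky (x : ℕ → ℝ) (i k : ℕ) : ℝ :=
  schurKernel x k i (x k) / √(schurKernel x k k (x k))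

theorem expCholesky_nonneg {x : ℕ → ℝ} (hx : StrictMono x) (i k : ℕ) : 0 ≤ expCholesky x i k :=
  div_nonneg (schurKernel.apply_nonneg hx k i) (sqrt_nonneg _)

theorem sum_expCholesky_mul_eq_sub {x : ℕ → ℝ} (hx : StrictMono x) (K i j : ℕ) :
    ∑ k ∈ range K, expCholesky x i k * expCholesky x j k =
      exp (x i * x j) - schurKernel x K j (x i) := by
  induction K with
  | zero => simp [schurKernel, mul_comm]
  | succ K ih =>
    have hsqrt := mul_self_sqrt (schurKernel.apply_nonneg hx K K)
    rw [sum_range_succ, ih, schurKernel, schurKernel.apply_comm x K i K, expCholesky,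
      expCholesky, div_mul_div_comm, hsqrt]
    ring

theorem sum_expCholesky_mul {x : ℕ → ℝ} (hx : StrictMono x) {K i : ℕ} (hi : i < K) (j : ℕ) :
    ∑ k ∈ range K, expCholesky x i k * expCholesky x j k = exp (x i * x j) := by
  rw [sum_expCholesky_mul_eq_sub hx, schurKernel.apply_eq_zero hx hi, sub_zero]

theorem Set.Finite.exists_strictMono_subset_range {α : Type*} [Field α] [LinearOrder α]
    [IsStrictOrderedRing α] {s : Set α} (hs : s.Finite) :
    ∃ x : ℕ → α, StrictMono x ∧ s ⊆ Set.range x := by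
  obtain ⟨M, hM⟩ := hs.bddAbove
  set e := hs.toFinset.orderEmbOfFin rfl
  refine ⟨fun m => if h : m < #hs.toFinset then e ⟨m, h⟩ else M + 1 + m, ?_, ?_⟩
  · refine strictMono_nat_of_lt_succ fun m => ?_
    by_cases h₁ : m + 1 < #hs.toFinset
    · simp only [dif_pos h₁, dif_pos (Nat.lt_of_succ_lt h₁)]
      exact e.strictMono (Fin.mk_lt_mk.2 m.lt_succ_self)
    by_cases h₀ : m < #hs.toFinset
    · have he : e ⟨m, h₀⟩ ∈ s := hs.mem_toFinset.1 (hs.toFinset.orderEmbOfFin_mem rfl _)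
      simp only [dif_pos h₀, dif_neg h₁]
      linarith [hM he, (m.cast_nonneg : (0 : α) ≤ m)]
    · simp only [dif_neg h₀, dif_neg h₁]
      push_cast
      linarith
  · intro a ha
    obtain ⟨i, rfl⟩ : a ∈ Set.range e := by simpa [e, range_orderEmbOfFin] using ha
    exact ⟨i, by simp⟩

/-- For every vector `v` (not necessarily nonnegative), the Hadamard exponential
`exp_H(v vᵀ)` is completely positive. -/
theorem hadamard_exp_vecMulVec_completelyPositive (n : ℕ) (v : Fin n → ℝ) :
    ∃ (k : ℕ) (U : Matrix (Fin n) (Fin k) ℝ),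
      (∀ i j, 0 ≤ U i j) ∧
      Matrix.of (fun i j => Real.exp (v i * v j)) = U * Uᵀ := by
  obtain ⟨x, hx, hv⟩ := (Set.finite_range v).exists_strictMono_subset_range
  choose σ hσ using fun i => hv (Set.mem_range_self i)
  have hσK : ∀ i, σ i < univ.sup σ + 1 := fun i => Nat.lt_succ_of_le (le_sup (mem_univ i))
  refine ⟨univ.sup σ + 1, of fun i k => expCholesky x (σ i) k,
    fun i k => expCholesky_nonneg hx _ _, ?_⟩
  ext i j
  rw [of_apply, mul_apply, ← hσ, ← hσ, ← sum_expCholesky_mul hx (hσK i)]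
  exact (Fin.sum_univ_eq_sum_range _ _).symm
end

section
/- Let X be a real symmetric n×n matrix that is positive semidefinite, has all entries nonnegative, and has rank at most 2. Then X is completely positive. -/
/-!
A positive semidefinite matrix of rank at most `2` is the Gram matrix `X i j = ⟪b i, b j⟫` of
vectors `b i` in the plane, and `X ≥ 0` says that these vectors pairwise make an angle of at most
`π / 2`. Hence they all lie in a closed quarter-plane bounded by the ray through an extreme vector
`b i₀`; rotating `b i₀` onto the first axis moves every `b i` into the nonnegative quadrant without
changing the Gram matrix.
-/

open Matrix

namespace Matrix

variable {ι κ R : Type*}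

theorem mul_transpose_eq_submatrix_of_col_eq_zero [Fintype κ] [CommSemiring R]
    (B : Matrix ι κ R) (p : κ → Prop) [DecidablePred p] (hB : ∀ i k, ¬ p k → B i k = 0) :
    B * Bᵀ = B.submatrix id ((↑) : {k // p k} → κ) * (B.submatrix id (↑))ᵀ := by
  ext i j
  rw [mul_apply, ← Fintype.sum_subtype_add_sum_subtype p,
    Fintype.sum_eq_zero (fun k : {k // ¬ p k} ↦ _) fun k ↦ by simp [hB i k k.2], add_zero]
  rfl

theorem exists_mul_transpose_eq_of_card_le [Fintype κ] [DecidableEq κ] [CommSemiring R]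
    (B : Matrix ι κ R) {r : ℕ} (hr : Fintype.card κ ≤ r) :
    ∃ B' : Matrix ι (Fin r) R, B' * B'ᵀ = B * Bᵀ := by
  obtain ⟨e⟩ := Function.Embedding.nonempty_of_card_le (hr.trans_eq (Fintype.card_fin r).symm)
  refine ⟨B * (1 : Matrix (Fin r) (Fin r) R).submatrix e id, ?_⟩
  rw [transpose_mul, Matrix.mul_assoc, ← Matrix.mul_assoc _ (_ᵀ), transpose_submatrix,
    transpose_one, ← submatrix_mul _ _ _ _ _ Function.bijective_id, Matrix.one_mul,
    submatrix_one_embedding, Matrix.one_mul]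

theorem PosSemidef.exists_eq_mul_transpose_of_rank_le [Fintype ι] [DecidableEq ι]
    {X : Matrix ι ι ℝ} (hX : X.PosSemidef) {r : ℕ} (hr : X.rank ≤ r) :
    ∃ B : Matrix ι (Fin r) ℝ, X = B * Bᵀ := by
  let ev := hX.isHermitian.eigenvalues
  let V : Matrix ι ι ℝ := hX.isHermitian.eigenvectorUnitary
  have hX' : X = V * diagonal ev * Vᵀ := by
    simpa [V, star_eq_conjTranspose, Function.comp_def] using hX.isHermitian.spectral_theorem
  let C := V * diagonal (fun k ↦ √(ev k))
  have hC : X = C * Cᵀ := by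
    have hD : diagonal (fun k ↦ √(ev k)) * diagonal (fun k ↦ √(ev k)) = diagonal ev := by
      rw [diagonal_mul_diagonal]
      exact congrArg diagonal (funext fun k ↦ Real.mul_self_sqrt (hX.eigenvalues_nonneg k))
    rw [hX', transpose_mul, diagonal_transpose, ← hD]
    simp only [C, Matrix.mul_assoc]
  rw [hC, mul_transpose_eq_submatrix_of_col_eq_zero C (fun k ↦ ev k ≠ 0)
    (fun i k hk ↦ by simp_all [C, mul_diagonal])]
  obtain ⟨B, hB⟩ := exists_mul_transpose_eq_of_card_le
    (C.submatrix id ((↑) : {k // ev k ≠ 0} → ι))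
    (hr.trans' hX.isHermitian.rank_eq_card_non_zero_eigs.ge)
  exact ⟨B, hB.symm⟩

theorem dotProduct_self_pos {n : Type*} [Fintype n] {v : n → ℝ} (hv : v ≠ 0) :
    0 < v ⬝ᵥ v :=
  (Fintype.sum_nonneg fun i ↦ mul_self_nonneg (v i)).lt_of_ne'
    (dotProduct_self_eq_zero.not.mpr hv)

end Matrix

def wedge (a b : Fin 2 → ℝ) : ℝ := a 0 * b 1 - a 1 * b 0

theorem dotProduct_mul_dotProduct_add_wedge_mul_wedge (v a b : Fin 2 → ℝ) :
    (v ⬝ᵥ a) * (v ⬝ᵥ b) + wedge v a * wedge v b = (v ⬝ᵥ v) * (a ⬝ᵥ b) := by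
  simp only [dotProduct, Fin.sum_univ_two, wedge]
  ring

theorem dotProduct_self_mul_wedge (s a b : Fin 2 → ℝ) :
    (s ⬝ᵥ s) * wedge a b = wedge s b * (s ⬝ᵥ a) - wedge s a * (s ⬝ᵥ b) := by
  simp only [dotProduct, Fin.sum_univ_two, wedge]
  ring

theorem exists_nonneg_dotProduct_eq_of_wedge_nonneg {ι : Type*} (b : ι → Fin 2 → ℝ)
    {v : Fin 2 → ℝ} (hv : v ≠ 0) (hdot : ∀ i, 0 ≤ v ⬝ᵥ b i) (hwedge : ∀ i, 0 ≤ wedge v (b i)) :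
    ∃ u : ι → Fin 2 → ℝ, (∀ i k, 0 ≤ u i k) ∧ ∀ i j, u i ⬝ᵥ u j = b i ⬝ᵥ b j := by
  set c := (√(v ⬝ᵥ v))⁻¹
  have hc : c * c * (v ⬝ᵥ v) = 1 := by
    rw [← mul_inv, Real.mul_self_sqrt (dotProduct_self_pos hv).le,
      inv_mul_cancel₀ (dotProduct_self_pos hv).ne']
  -- the coordinates of `b i` in the orthonormal frame `c • v`, `c • (-v 1, v 0)`
  refine ⟨fun i ↦ c • ![v ⬝ᵥ b i, wedge v (b i)], fun i k ↦ ?_, fun i j ↦ ?_⟩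
  · fin_cases k
    exacts [mul_nonneg (by positivity) (hdot i), mul_nonneg (by positivity) (hwedge i)]
  · simp only [smul_dotProduct, dotProduct_smul, smul_eq_mul, cons_dotProduct_cons,
      dotProduct_of_isEmpty, add_zero]
    linear_combination c * c * dotProduct_mul_dotProduct_add_wedge_mul_wedge v (b i) (b j)
      + (b i ⬝ᵥ b j) * hc

theorem exists_forall_wedge_nonneg {ι : Type*} [Fintype ι] (b : ι → Fin 2 → ℝ) (hb : b ≠ 0)
    (hg : ∀ i j, 0 ≤ b i ⬝ᵥ b j) : ∃ i, b i ≠ 0 ∧ ∀ j, 0 ≤ wedge (b i) (b j) := by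
  classical
  set s := ∑ i, b i
  have hs : ∀ j, b j ≠ 0 → 0 < s ⬝ᵥ b j := by
    intro j hj
    rw [sum_dotProduct]
    exact (dotProduct_self_pos hj).trans_le
      (Finset.single_le_sum (fun i _ ↦ hg i j) (Finset.mem_univ j))
  -- On the half-plane `0 < s ⬝ᵥ x`, `wedge s x / (s ⬝ᵥ x)` is the tangent of the angle from `s`
  -- to `x`; a minimiser is an extreme vector.
  obtain ⟨i, hi, hmin⟩ := (Finset.univ.filter fun j ↦ b j ≠ 0).exists_min_image
    (fun j ↦ wedge s (b j) / (s ⬝ᵥ b j)) (by simpa [Finset.Nonempty] using Function.ne_iff.mp hb)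
  have hi' : b i ≠ 0 := (Finset.mem_filter.mp hi).2
  have hss : 0 < s ⬝ᵥ s := dotProduct_self_pos fun hs0 ↦ by simpa [hs0] using hs i hi'
  refine ⟨i, hi', fun j ↦ ?_⟩
  by_cases hj : b j = 0
  · simp [hj, wedge]
  have hij := hmin j (by simpa using hj)
  rw [div_le_div_iff₀ (hs i hi') (hs j hj)] at hij
  refine (mul_nonneg_iff_of_pos_left hss).mp ?_
  rw [dotProduct_self_mul_wedge]
  linarith

theorem exists_nonneg_dotProduct_eq_of_dotProduct_nonneg {ι : Type*} [Fintype ι]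
    (b : ι → Fin 2 → ℝ) (hg : ∀ i j, 0 ≤ b i ⬝ᵥ b j) :
    ∃ u : ι → Fin 2 → ℝ, (∀ i k, 0 ≤ u i k) ∧ ∀ i j, u i ⬝ᵥ u j = b i ⬝ᵥ b j := by
  by_cases hb : b = 0
  · exact ⟨b, by simp [hb], fun _ _ ↦ rfl⟩
  obtain ⟨i, hi, hwedge⟩ := exists_forall_wedge_nonneg b hb hg
  exact exists_nonneg_dotProduct_eq_of_wedge_nonneg b hi (hg i) hwedge

/-- A real positive semidefinite matrix with nonnegative entries and rank at most 2
is completely positive. -/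
theorem rank_le_two_nonneg_posSemidef_completelyPositive (n : ℕ)
    (X : Matrix (Fin n) (Fin n) ℝ) (hX : X.PosSemidef)
    (hnn : ∀ i j, 0 ≤ X i j) (hr : X.rank ≤ 2) :
    ∃ (k : ℕ) (U : Matrix (Fin n) (Fin k) ℝ),
      (∀ i j, 0 ≤ U i j) ∧ X = U * Uᵀ := by
  obtain ⟨B, rfl⟩ := hX.exists_eq_mul_transpose_of_rank_le hr
  obtain ⟨u, hu, huB⟩ := exists_nonneg_dotProduct_eq_of_dotProduct_nonneg B hnn
  exact ⟨2, of u, hu, ext fun i j ↦ (huB i j).symm⟩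
end

section
/- Let A ∈ ℝ^{m×n} and k ∈ ℕ. There exist entrywise nonnegative matrices U ∈ ℝ^{m×k} and V ∈ ℝ^{n×k} with A = U Vᵀ if and only if there exist symmetric matrices B ∈ ℝ^{m×m} and C ∈ ℝ^{n×n} such that the (m+n)×(m+n) block matrix [[B, A], [Aᵀ, C]] can be written as W Wᵀ for some entrywise nonnegative W ∈ ℝ^{(m+n)×k} (i.e., the block matrix is completely positive with a decomposition of k columns). -/
open Matrix

/-! Stacking `U` on top of `V` gives a nonnegative `W` whose Gram matrix `W Wᵀ` has off-diagonal
block `U Vᵀ`; conversely, the upper and lower row blocks of any such `W` factor the off-diagonal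
block `A`. -/

namespace Matrix

variable {R : Type*} {l m₁ m₂ : Type*}

theorem fromRows_nonneg_iff [Zero R] [LE R] (U : Matrix m₁ l R) (V : Matrix m₂ l R) :
    (∀ i j, 0 ≤ fromRows U V i j) ↔ (∀ i j, 0 ≤ U i j) ∧ (∀ i j, 0 ≤ V i j) :=
  Sum.forall

theorem isSymm_mul_transpose [Fintype l] [CommSemiring R] (U : Matrix m₁ l R) :
    (U * Uᵀ).IsSymm := by
  rw [IsSymm, transpose_mul, transpose_transpose]

theorem fromRows_mul_transpose_fromRows [Fintype l] [CommSemiring R]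
    (U : Matrix m₁ l R) (V : Matrix m₂ l R) :
    fromRows U V * (fromRows U V)ᵀ = fromBlocks (U * Uᵀ) (U * Vᵀ) (V * Uᵀ) (V * Vᵀ) := by
  rw [transpose_fromRows, fromRows_mul_fromCols]

theorem eq_toRows₁_mul_transpose_toRows₂_of_fromBlocks_eq [Fintype l] [CommSemiring R]
    {B : Matrix m₁ m₁ R} {A : Matrix m₁ m₂ R} {A' : Matrix m₂ m₁ R} {C : Matrix m₂ m₂ R}
    {W : Matrix (m₁ ⊕ m₂) l R} (h : fromBlocks B A A' C = W * Wᵀ) :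
    A = W.toRows₁ * W.toRows₂ᵀ := by
  rw [← fromRows_toRows W, fromRows_mul_transpose_fromRows] at h
  exact (fromBlocks_inj.mp h).2.1

end Matrix

/-- `A` admits a nonnegative factorization `A = U Vᵀ` with `k` columns iff there are
symmetric matrices `B, C` such that the block matrix `[[B, A], [Aᵀ, C]]` is completely
positive with a nonnegative factorization of `k` columns. -/
theorem nonneg_factorization_iff_block_completelyPositive (m n k : ℕ)
    (A : Matrix (Fin m) (Fin n) ℝ) :
    (∃ (U : Matrix (Fin m) (Fin k) ℝ) (V : Matrix (Fin n) (Fin k) ℝ),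
      (∀ i j, 0 ≤ U i j) ∧ (∀ i j, 0 ≤ V i j) ∧ A = U * Vᵀ) ↔
    (∃ (B : Matrix (Fin m) (Fin m) ℝ) (C : Matrix (Fin n) (Fin n) ℝ),
      B.IsSymm ∧ C.IsSymm ∧
      ∃ W : Matrix (Fin m ⊕ Fin n) (Fin k) ℝ,
        (∀ i j, 0 ≤ W i j) ∧ Matrix.fromBlocks B A Aᵀ C = W * Wᵀ) := by
  constructor
  · rintro ⟨U, V, hU, hV, rfl⟩
    refine ⟨U * Uᵀ, V * Vᵀ, isSymm_mul_transpose U, isSymm_mul_transpose V, fromRows U V,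
      (fromRows_nonneg_iff U V).mpr ⟨hU, hV⟩, ?_⟩
    rw [fromRows_mul_transpose_fromRows, transpose_mul, transpose_transpose]
  · rintro ⟨B, C, -, -, W, hW, hblock⟩
    rw [← fromRows_toRows W, fromRows_nonneg_iff] at hW
    exact ⟨W.toRows₁, W.toRows₂, hW.1, hW.2,
      eq_toRows₁_mul_transpose_toRows₂_of_fromBlocks_eq hblock⟩
end

section
/- Let A be a real n×n matrix with positive entries. The set C = {X ∈ ℝ^{n×n} : exp(X_{ij}) ≥ A_{ij}/2 for all i, j} is convex, and the function f(X) = Σ_{i,j=1}^n (exp(X_{ij}) − A_{ij})² is convex on C. (The scalar core of this claim: for a > 0, the function x ↦ (eˣ − a)² is convex on the set {x ∈ ℝ : eˣ ≥ a/2}.) -/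
/-! The scalar loss `(eˣ - a)²` has second derivative `2eˣ(2eˣ - a)`, which is nonnegative exactly
where `eˣ ≥ a/2`. The matrix loss is a sum of such scalar losses in separate coordinates, and `C`
is the product of their domains. -/

open Finset in
theorem convexOn_pi_sum {𝕜 ι β : Type*} {E : ι → Type*} [Semiring 𝕜] [PartialOrder 𝕜]
    [∀ i, AddCommMonoid (E i)] [∀ i, SMul 𝕜 (E i)] [AddCommMonoid β] [PartialOrder β]
    [IsOrderedAddMonoid β] [DistribSMul 𝕜 β] [Fintype ι] {s : ∀ i, Set (E i)} {f : ∀ i, E i → β}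
    (hf : ∀ i, ConvexOn 𝕜 (s i) (f i)) :
    ConvexOn 𝕜 {x : ∀ i, E i | ∀ i, x i ∈ s i} fun x => ∑ i, f i (x i) := by
  refine ⟨fun x hx y hy a b ha hb hab i => (hf i).1 (hx i) (hy i) ha hb hab,
    fun x hx y hy a b ha hb hab => ?_⟩
  simp only [smul_sum, ← sum_add_distrib]
  exact sum_le_sum fun i _ => (hf i).2 (hx i) (hy i) ha hb hab

open Real in
theorem convexOn_sq_exp_sub (a : ℝ) :
    ConvexOn ℝ {x | a / 2 ≤ exp x} fun x => (exp x - a) ^ 2 := by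
  have hD : Convex ℝ {x | a / 2 ≤ exp x} := (Set.ordConnected_Ici.preimage_mono exp_monotone).convex
  refine convexOn_of_hasDerivWithinAt2_nonneg hD (f' := fun x => 2 * (exp x - a) * exp x)
    (f'' := fun x => 2 * exp x * (2 * exp x - a)) (by fun_prop) (fun x _ => ?_) (fun x _ => ?_)
    (fun x hx => ?_)
  · exact (((hasDerivAt_exp x).sub_const a).fun_pow 2).congr_deriv (by ring) |>.hasDerivWithinAt
  · exact ((((hasDerivAt_exp x).sub_const a).const_mul 2).fun_mul (hasDerivAt_exp x)).congr_deriv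
      (by ring) |>.hasDerivWithinAt
  · have hx : a / 2 ≤ exp x := (interior_subset hx : x ∈ _)
    exact mul_nonneg (by positivity) (by linarith)

theorem mseLoss_convexOn_general (n : ℕ) (A : Matrix (Fin n) (Fin n) ℝ) :
    Convex ℝ {X : Matrix (Fin n) (Fin n) ℝ | ∀ i j, A i j / 2 ≤ Real.exp (X i j)} ∧
    ConvexOn ℝ {X : Matrix (Fin n) (Fin n) ℝ | ∀ i j, A i j / 2 ≤ Real.exp (X i j)}
      (fun X => ∑ i, ∑ j, (Real.exp (X i j) - A i j) ^ 2) ∧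
    ∀ a : ℝ, 0 < a →
      ConvexOn ℝ {x : ℝ | a / 2 ≤ Real.exp x} (fun x => (Real.exp x - a) ^ 2) := by
  have hf : ConvexOn ℝ {X : Matrix (Fin n) (Fin n) ℝ | ∀ i j, A i j / 2 ≤ Real.exp (X i j)}
      (fun X => ∑ i, ∑ j, (Real.exp (X i j) - A i j) ^ 2) :=
    convexOn_pi_sum fun i => convexOn_pi_sum fun j => convexOn_sq_exp_sub (A i j)
  exact ⟨hf.1, hf, fun a _ => convexOn_sq_exp_sub a⟩

/-- The set `C = {X : exp(Xᵢⱼ) ≥ Aᵢⱼ/2}` is convex and the MSE loss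
`X ↦ ∑ᵢⱼ (exp(Xᵢⱼ) - Aᵢⱼ)²` is convex on `C`; the scalar core being that for `a > 0`
the map `x ↦ (eˣ - a)²` is convex on `{x : eˣ ≥ a/2}`. -/
theorem mseLoss_convexOn (n : ℕ) (A : Matrix (Fin n) (Fin n) ℝ)
    (hA : ∀ i j, 0 < A i j) :
    Convex ℝ {X : Matrix (Fin n) (Fin n) ℝ | ∀ i j, A i j / 2 ≤ Real.exp (X i j)} ∧
    ConvexOn ℝ {X : Matrix (Fin n) (Fin n) ℝ | ∀ i j, A i j / 2 ≤ Real.exp (X i j)}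
      (fun X => ∑ i, ∑ j, (Real.exp (X i j) - A i j) ^ 2) ∧
    ∀ a : ℝ, 0 < a →
      ConvexOn ℝ {x : ℝ | a / 2 ≤ Real.exp x} (fun x => (Real.exp x - a) ^ 2) :=
  mseLoss_convexOn_general n A
end

section
/- (Weak duality for the KL-loss problem.) Let A be a real symmetric n×n matrix with positive entries. Let X and Y be real symmetric n×n positive semidefinite matrices such that A_{ij} + Y_{ij} > 0 for all i, j. Then Σ_{i,j} [A_{ij} + Y_{ij} − (A_{ij} + Y_{ij}) log(A_{ij} + Y_{ij})] + Σ_{i,j} [A_{ij} log A_{ij} − A_{ij}] ≤ Σ_{i,j} [A_{ij}(log A_{ij} − X_{ij}) + exp(X_{ij}) − A_{ij}]; i.e., the dual objective at Y is at most the primal KL objective at X. -/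
/-!
Entrywise, the Fenchel–Young inequality for `exp` and its conjugate `b ↦ b log b - b`, taken at
`x = X i j` and `b = A i j + Y i j`, bounds the duality gap below by `∑ i j, X i j * Y i j`.
This is the Frobenius inner product of two positive semidefinite matrices, which is nonnegative
by the Schur product theorem.
-/

open Matrix
open scoped ComplexOrder

theorem Real.mul_le_exp_add_mul_log_sub (x : ℝ) {b : ℝ} (hb : 0 ≤ b) :
    x * b ≤ Real.exp x + b * Real.log b - b := by
  rcases hb.eq_or_lt with rfl | hb
  · simpa using (Real.exp_pos x).le
  have h := mul_le_mul_of_nonneg_left (Real.add_one_le_exp (x - Real.log b)) hb.le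
  rw [Real.exp_sub, Real.exp_log hb, mul_div_cancel₀ _ hb.ne'] at h
  linarith

theorem Matrix.PosSemidef.sum_hadamard_nonneg {ι 𝕜 : Type*} [Fintype ι] [RCLike 𝕜]
    {A B : Matrix ι ι 𝕜} (hA : A.PosSemidef) (hB : B.PosSemidef) :
    0 ≤ ∑ i, ∑ j, (A ⊙ B) i j := by
  simpa [dotProduct, mulVec] using (hA.hadamard hB).dotProduct_mulVec_nonneg 1

theorem klLoss_weak_duality_general (n : ℕ) (A X Y : Matrix (Fin n) (Fin n) ℝ)
    (hX : X.PosSemidef) (hY : Y.PosSemidef)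
    (hAY : ∀ i j, 0 < A i j + Y i j) :
    (∑ i, ∑ j, (A i j + Y i j - (A i j + Y i j) * Real.log (A i j + Y i j))) +
      (∑ i, ∑ j, (A i j * Real.log (A i j) - A i j)) ≤
    ∑ i, ∑ j, (A i j * (Real.log (A i j) - X i j) + Real.exp (X i j) - A i j) := by
  have hgap : ∀ i j, (X ⊙ Y) i j ≤
      (A i j * (Real.log (A i j) - X i j) + Real.exp (X i j) - A i j)
        - (A i j + Y i j - (A i j + Y i j) * Real.log (A i j + Y i j))
        - (A i j * Real.log (A i j) - A i j) := fun i j => by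
    rw [hadamard_apply]
    linear_combination Real.mul_le_exp_add_mul_log_sub (X i j) (hAY i j).le
  have hsum := Finset.sum_le_sum (s := .univ) fun i _ =>
    Finset.sum_le_sum (s := .univ) fun j _ => hgap i j
  simp only [Finset.sum_sub_distrib] at hsum ⊢
  linarith [hX.sum_hadamard_nonneg hY]

/-- Weak duality for the KL-loss problem: for positive semidefinite `X` and `Y`, the
dual objective at `Y` is at most the primal KL objective at `X`. -/
theorem klLoss_weak_duality (n : ℕ) (A X Y : Matrix (Fin n) (Fin n) ℝ)
    (hAsymm : A.IsSymm) (hApos : ∀ i j, 0 < A i j)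
    (hX : X.PosSemidef) (hY : Y.PosSemidef)
    (hAY : ∀ i j, 0 < A i j + Y i j) :
    (∑ i, ∑ j, (A i j + Y i j - (A i j + Y i j) * Real.log (A i j + Y i j))) +
      (∑ i, ∑ j, (A i j * Real.log (A i j) - A i j)) ≤
    ∑ i, ∑ j, (A i j * (Real.log (A i j) - X i j) + Real.exp (X i j) - A i j) :=
  klLoss_weak_duality_general n A X Y hX hY hAY
end

section
/- (Optimality condition for the KL-loss problem.) Let A be a real symmetric n×n matrix with positive entries, and let X be a real symmetric n×n positive semidefinite matrix such that the matrix Y = exp_H(X) − A (with entries exp(X_{ij}) − A_{ij}) is positive semidefinite and Tr(X Y) = 0. Then X minimizes the function f(X') = Σ_{i,j} [A_{ij}(log A_{ij} − X'_{ij}) + exp(X'_{ij}) − A_{ij}] over all real symmetric positive semidefinite n×n matrices X'. -/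
/-!
The KL loss is convex with gradient `Y = exp_H(X) - A`, so it lies above its tangent plane at `X`:
`f(X') ≥ f(X) + ⟨X' - X, Y⟩`. As `Y` is symmetric, the Frobenius pairing equals
`Tr(X' Y) - Tr(X Y) = Tr(X' Y)`, and the trace of a product of positive semidefinite matrices
is nonnegative.
-/

open Matrix

namespace Matrix

open scoped ComplexOrder

theorem PosSemidef.trace_mul_nonneg {n 𝕜 : Type*} [Fintype n] [RCLike 𝕜]
    {M N : Matrix n n 𝕜} (hM : M.PosSemidef) (hN : N.PosSemidef) : 0 ≤ (M * N).trace := by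
  classical
  open scoped MatrixOrder in
  obtain ⟨B, rfl⟩ := CStarAlgebra.nonneg_iff_eq_star_mul_self.mp hN.nonneg
  rw [star_eq_conjTranspose, ← Matrix.mul_assoc, trace_mul_cycle]
  exact (hM.mul_mul_conjTranspose_same B).trace_nonneg

end Matrix

theorem Real.exp_mul_sub_le_exp_sub_exp (a b : ℝ) :
    Real.exp a * (b - a) ≤ Real.exp b - Real.exp a := by
  have h := mul_le_mul_of_nonneg_left (Real.add_one_le_exp (b - a)) (Real.exp_nonneg a)
  rw [← Real.exp_add, add_sub_cancel] at h
  linarith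

section KLLoss

variable {m n : Type*} [Fintype m] [Fintype n]

noncomputable def klLoss (A X : Matrix m n ℝ) : ℝ :=
  ∑ i, ∑ j, (A i j * (Real.log (A i j) - X i j) + Real.exp (X i j) - A i j)

noncomputable def klGrad (A X : Matrix m n ℝ) : Matrix m n ℝ :=
  Matrix.of fun i j => Real.exp (X i j) - A i j

theorem klLoss_add_sum_hadamard_klGrad_le (A X X' : Matrix m n ℝ) :
    klLoss A X + ∑ i, ∑ j, ((X' - X) ⊙ klGrad A X) i j ≤ klLoss A X' := by
  simp only [klLoss, klGrad, ← Finset.sum_add_distrib]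
  gcongr with i _ j _
  have := Real.exp_mul_sub_le_exp_sub_exp (X i j) (X' i j)
  simp only [hadamard_apply, Matrix.sub_apply, of_apply]
  linarith

end KLLoss

theorem klLoss_optimality_general (n : ℕ) (A X : Matrix (Fin n) (Fin n) ℝ)
    (hY : (Matrix.of (fun i j => Real.exp (X i j) - A i j)).PosSemidef)
    (htr : Matrix.trace (X * Matrix.of (fun i j => Real.exp (X i j) - A i j)) = 0) :
    ∀ X' : Matrix (Fin n) (Fin n) ℝ, X'.PosSemidef →
      (∑ i, ∑ j, (A i j * (Real.log (A i j) - X i j) + Real.exp (X i j) - A i j)) ≤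
      ∑ i, ∑ j, (A i j * (Real.log (A i j) - X' i j) + Real.exp (X' i j) - A i j) := by
  intro X' hX'
  change (klGrad A X).PosSemidef at hY
  change (X * klGrad A X).trace = 0 at htr
  have hYsymm : (klGrad A X)ᵀ = klGrad A X := by
    simpa [conjTranspose_eq_transpose_of_trivial] using hY.isHermitian.eq
  have hpairing : ∑ i, ∑ j, ((X' - X) ⊙ klGrad A X) i j = (X' * klGrad A X).trace := by
    rw [sum_hadamard_eq, hYsymm, sub_mul, trace_sub, htr, sub_zero]
  have htangent := klLoss_add_sum_hadamard_klGrad_le A X X'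
  have hnonneg := hX'.trace_mul_nonneg hY
  change klLoss A X ≤ klLoss A X'
  linarith

/-- Optimality condition for the KL-loss problem: if `X ⪰ 0`,
`Y = exp_H(X) - A ⪰ 0` and `Tr(X Y) = 0`, then `X` minimizes the KL loss over all
positive semidefinite matrices. -/
theorem klLoss_optimality (n : ℕ) (A X : Matrix (Fin n) (Fin n) ℝ)
    (hAsymm : A.IsSymm) (hApos : ∀ i j, 0 < A i j)
    (hX : X.PosSemidef)
    (hY : (Matrix.of (fun i j => Real.exp (X i j) - A i j)).PosSemidef)
    (htr : Matrix.trace (X * Matrix.of (fun i j => Real.exp (X i j) - A i j)) = 0) :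
    ∀ X' : Matrix (Fin n) (Fin n) ℝ, X'.PosSemidef →
      (∑ i, ∑ j, (A i j * (Real.log (A i j) - X i j) + Real.exp (X i j) - A i j)) ≤
      ∑ i, ∑ j, (A i j * (Real.log (A i j) - X' i j) + Real.exp (X' i j) - A i j) :=
  klLoss_optimality_general n A X hY htr
end
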